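/- For all integers L ≥ 2 and K ≥ 2, the binary string (1)_L (0)_K (1)_L (L ones, then K zeros, then L ones), i.e., the integer B = R_L·10^{L+K} + R_L with R_L = (10^L − 1)/9, is a Papadakis–Webster binary string: there exists a positive integer D with D > rev(D) and D − rev(D) having the same number of decimal digits as D, such that the Papadakis–Webster integer produced by D equals 99·B. The same holds for the all-ones string (1)_L, i.e., B = R_L, for every L ≥ 2. -/

import Mathlib

/-!
For the all-ones string take `D = 6·10^L`: then `E = D - rev D = 59…94` (with `L - 1` nines) and
`E + rev E = 59…94 + 49…95 = 99·R_L`. For `(1)_L (0)_K (1)_L` take `D = 6·10^(2L+K) + 9·10^L`: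
then `E = 59…910…089…94` (blocks of `L - 1` nines and `K - 1` zeros) and again `E + rev E` is
`99` times the required string. In both cases `D` and `E` are given by their digit lists, on
which `rev` is just list reversal, and the two identities are polynomial in `10^(L-1)`, `10^(K-1)`.
-/

/-- Digital reversal of a natural number (in base 10). -/
def rev (D : ℕ) : ℕ := Nat.ofDigits 10 ((Nat.digits 10 D).reverse)

/-- The length-`L` repunit `(10^L - 1)/9`, whose decimal expansion is `L` ones. -/
def repunit (L : ℕ) : ℕ := (10 ^ L - 1) / 9

/-- `B` is a Papadakis–Webster binary string: there is a positive integer `D`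
with `D > rev D` and `E = D - rev D` having the same number of decimal digits
as `D`, whose Papadakis–Webster integer `F = E + rev E` equals `99·B`. -/
def IsPWBS (B : ℕ) : Prop :=
  ∃ D : ℕ, 0 < D ∧ rev D < D ∧
    (Nat.digits 10 (D - rev D)).length = (Nat.digits 10 D).length ∧
    (D - rev D) + rev (D - rev D) = 99 * B

open Nat List

lemma ofDigits_replicate_pred_add_one {b : ℕ} (hb : 0 < b) (n : ℕ) :
    ofDigits b (replicate n (b - 1)) + 1 = b ^ n := by
  induction n with
  | zero => simp
  | succ n ih =>
    rw [replicate_succ, ofDigits_cons, pow_succ, ← ih, Nat.add_mul, one_mul, mul_comm]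
    omega

lemma nine_mul_repunit_add_one (n : ℕ) : 9 * repunit n + 1 = 10 ^ n := by
  have h9 : 10 ^ n % 9 = 1 := by simp [Nat.pow_mod]
  have h1 : 1 ≤ 10 ^ n := Nat.one_le_pow _ _ (by norm_num)
  unfold repunit
  omega

lemma isPWBS_of_digits {d e : List ℕ} {B : ℕ}
    (hd : digits 10 (ofDigits 10 d) = d) (he : digits 10 (ofDigits 10 e) = e)
    (hpos : 0 < ofDigits 10 e) (hlen : e.length = d.length)
    (hsub : ofDigits 10 e + ofDigits 10 d.reverse = ofDigits 10 d)
    (hsum : ofDigits 10 e + ofDigits 10 e.reverse = 99 * B) : IsPWBS B := by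
  have hrevd : rev (ofDigits 10 d) = ofDigits 10 d.reverse := by rw [rev, hd]
  have hrevE : rev (ofDigits 10 e) = ofDigits 10 e.reverse := by rw [rev, he]
  have hE : ofDigits 10 d - rev (ofDigits 10 d) = ofDigits 10 e := by omega
  refine ⟨ofDigits 10 d, by omega, by omega, ?_, ?_⟩
  · rw [hE, he, hd, hlen]
  · rw [hE, hrevE, hsum]

lemma isPWBS_repunit {L : ℕ} (hL : 0 < L) : IsPWBS (repunit L) := by
  obtain ⟨a, rfl⟩ : ∃ a, L = a + 1 := ⟨L - 1, by omega⟩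
  have hX : ofDigits 10 (replicate a 9) + 1 = 10 ^ a :=
    ofDigits_replicate_pred_add_one (by norm_num) a
  have hR := nine_mul_repunit_add_one (a + 1)
  -- digit lists are least significant digit first
  refine isPWBS_of_digits (d := replicate (a + 1) 0 ++ [6]) (e := 4 :: replicate a 9 ++ [5])
    (digits_ofDigits 10 (by norm_num) _ (by simp) (by simp))
    (digits_ofDigits 10 (by norm_num) _ (by simp; omega) (by simp)) (by simp [ofDigits_cons])
    (by simp) ?_ ?_
  · simp only [ofDigits_append, ofDigits_cons, ofDigits_nil, ofDigits_replicate_zero, reverse_append,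
      reverse_cons, reverse_replicate, reverse_nil, length_replicate, cons_append, nil_append]
    zify at hX ⊢
    linear_combination 10 * hX
  · simp only [ofDigits_append, ofDigits_cons, ofDigits_nil, reverse_append, reverse_cons,
      reverse_replicate, reverse_nil, length_replicate, cons_append, nil_append]
    zify at hX hR ⊢
    linear_combination 20 * hX - 11 * hR

lemma isPWBS_repunit_mul_pow_add_repunit {L K : ℕ} (hL : 0 < L) (hK : 0 < K) :
    IsPWBS (repunit L * 10 ^ (L + K) + repunit L) := by
  obtain ⟨a, rfl⟩ : ∃ a, L = a + 1 := ⟨L - 1, by omega⟩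
  obtain ⟨c, rfl⟩ : ∃ c, K = c + 1 := ⟨K - 1, by omega⟩
  have hX : ofDigits 10 (replicate a 9) + 1 = 10 ^ a :=
    ofDigits_replicate_pred_add_one (by norm_num) a
  have hR := nine_mul_repunit_add_one (a + 1)
  refine isPWBS_of_digits (d := replicate (a + 1) 0 ++ 9 :: replicate (a + c + 1) 0 ++ [6])
    (e := 4 :: replicate a 9 ++ 8 :: replicate c 0 ++ 1 :: replicate a 9 ++ [5])
    (digits_ofDigits 10 (by norm_num) _ (by simp) (by simp))
    (digits_ofDigits 10 (by norm_num) _ (by simp; omega) (by simp)) (by simp [ofDigits_cons])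
    (by simp; omega) ?_ ?_
  · simp only [ofDigits_append, ofDigits_cons, ofDigits_nil, ofDigits_replicate_zero, reverse_append,
      reverse_cons, reverse_replicate, reverse_nil, length_replicate,
      cons_append, nil_append, append_assoc]
    zify at hX ⊢
    linear_combination (10 + 1000 * (10 : ℤ) ^ a * 10 ^ c) * hX
  · simp only [ofDigits_append, ofDigits_cons, ofDigits_nil, ofDigits_replicate_zero, reverse_append,
      reverse_cons, reverse_replicate, reverse_nil, length_replicate,
      cons_append, nil_append, append_assoc]
    zify at hX hR ⊢
    linear_combination (20 + 2000 * (10 : ℤ) ^ a * 10 ^ c) * hX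
      - (11 + 1100 * (10 : ℤ) ^ a * 10 ^ c) * hR

/-- for all `L ≥ 2` and `K ≥ 2`, the binary string
`(1)_L (0)_K (1)_L`, i.e. `B = R_L·10^{L+K} + R_L`, is a Papadakis–Webster
binary string; so is the all-ones string `(1)_L`, i.e. `B = R_L`, for `L ≥ 2`. -/
theorem stmt14 (L K : ℕ) (hL : 2 ≤ L) (hK : 2 ≤ K) :
    IsPWBS (repunit L * 10 ^ (L + K) + repunit L) ∧ IsPWBS (repunit L) :=
  ⟨isPWBS_repunit_mul_pow_add_repunit (by omega) (by omega), isPWBS_repunit (by omega)⟩
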